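/- arXiv:1506.01604 — 3 statements merged into one kernel-verified Lean document; each statement's English description precedes it below -/
import Mathlib

section
/- The ℤ-submodule of the integral group ring ℤ[SL₂(F)] spanned by the seven support-class elements A, B, C, D₊, D₋, E₊, E₋ is closed under multiplication: for any x, y in the ℤ-span of {A, B, C, D₊, D₋, E₊, E₋}, the product x·y again lies in this span. Hence this span is a (non-unital) subring of ℤ[SL₂(F)]. -/
open MonoidAlgebra

/-- Sum of all elements of `SL₂(F)` whose support pattern is given by the four
Booleans (`true` = the entry is nonzero, `false` = the entry is zero). -/
noncomputable def suppClass (R : Type*) [CommRing R] (F : Type*) [Field F] [Fintype F]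
    [DecidableEq F] (b₁₁ b₁₂ b₂₁ b₂₂ : Bool) :
    MonoidAlgebra R (Matrix.SpecialLinearGroup (Fin 2) F) :=
  ∑ g ∈ Finset.univ.filter
      (fun g : Matrix.SpecialLinearGroup (Fin 2) F =>
        (b₁₁ = true ↔ (g : Matrix (Fin 2) (Fin 2) F) 0 0 ≠ 0) ∧
        (b₁₂ = true ↔ (g : Matrix (Fin 2) (Fin 2) F) 0 1 ≠ 0) ∧
        (b₂₁ = true ↔ (g : Matrix (Fin 2) (Fin 2) F) 1 0 ≠ 0) ∧
        (b₂₂ = true ↔ (g : Matrix (Fin 2) (Fin 2) F) 1 1 ≠ 0)),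
    MonoidAlgebra.of R (Matrix.SpecialLinearGroup (Fin 2) F) g

/-- The support class `A` (diagonal matrices). -/
noncomputable def elA (R : Type*) [CommRing R] (F : Type*) [Field F] [Fintype F] [DecidableEq F] :=
  suppClass R F true false false true
/-- The support class `B` (antidiagonal matrices). -/
noncomputable def elB (R : Type*) [CommRing R] (F : Type*) [Field F] [Fintype F] [DecidableEq F] :=
  suppClass R F false true true false
/-- The support class `C` (matrices with all entries nonzero). -/
noncomputable def elC (R : Type*) [CommRing R] (F : Type*) [Field F] [Fintype F] [DecidableEq F] :=
  suppClass R F true true true true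
/-- The support class `D₊` (upper triangular with nonzero entries). -/
noncomputable def elDp (R : Type*) [CommRing R] (F : Type*) [Field F] [Fintype F] [DecidableEq F] :=
  suppClass R F true true false true
/-- The support class `D₋` (lower triangular with nonzero entries). -/
noncomputable def elDm (R : Type*) [CommRing R] (F : Type*) [Field F] [Fintype F] [DecidableEq F] :=
  suppClass R F true false true true
/-- The support class `E₊`. -/
noncomputable def elEp (R : Type*) [CommRing R] (F : Type*) [Field F] [Fintype F] [DecidableEq F] :=
  suppClass R F true true true false
/-- The support class `E₋`. -/
noncomputable def elEm (R : Type*) [CommRing R] (F : Type*) [Field F] [Fintype F] [DecidableEq F] :=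
  suppClass R F false true true true

/-!
Monomial matrices act on support patterns by permuting rows (on the left) or columns (on the
right), so multiplying by them, hence by `A` and `B`, preserves the span; the Weyl element
`w = !![0, 1; -1, 0]` gives `D₊ w = E₊`, `w D₊ = E₋`, `w D₊ w = D₋`. The sum `Σ` of all group
elements equals `A + B + C + D₊ + D₋ + E₊ + E₋` and absorbs every class up to a scalar, which
handles `C = Σ - (A + B + D₊ + D₋ + E₊ + E₋)`. Everything thus reduces to `D₊ D₊` and `D₊ D₋`.
For these, the Borel subgroups `B₊ = {g₂₁ = 0}` and `B₋ = {g₁₂ = 0}` have sums `A + D₊` and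
`A + D₋`, while `B₊ B₊ = |B₊| B₊` and `B₊ B₋ = |B₊ ∩ B₋| · (sum over the big cell g₂₂ ≠ 0)`,
the big cell being a union of support classes.
-/

open Finset Pointwise

section GroupAlgebra

variable {R G : Type*} [CommSemiring R] [Group G]

theorem MonoidAlgebra.sum_of_mul_eq_card_smul {s : Finset G} {x : MonoidAlgebra R G}
    (h : ∀ t ∈ s, of R G t * x = x) : (∑ t ∈ s, of R G t) * x = #s • x := by
  rw [sum_mul, sum_congr rfl h, sum_const]

theorem MonoidAlgebra.mul_sum_of_eq_card_smul {s : Finset G} {x : MonoidAlgebra R G}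
    (h : ∀ t ∈ s, x * of R G t = x) : x * ∑ t ∈ s, of R G t = #s • x := by
  rw [mul_sum, sum_congr rfl h, sum_const]

variable [Fintype G]

theorem MonoidAlgebra.of_mul_sum_filter_of (t : G) {p q : G → Prop} [DecidablePred p]
    [DecidablePred q] (h : ∀ g, p g ↔ q (t * g)) :
    of R G t * ∑ g with p g, of R G g = ∑ g with q g, of R G g := by
  simp only [mul_sum, sum_filter]
  exact Fintype.sum_equiv (Equiv.mulLeft t) _ _ fun g => by simp [h]

theorem MonoidAlgebra.sum_filter_of_mul_of (t : G) {p q : G → Prop} [DecidablePred p]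
    [DecidablePred q] (h : ∀ g, p g ↔ q (g * t)) :
    (∑ g with p g, of R G g) * of R G t = ∑ g with q g, of R G g := by
  simp only [sum_mul, sum_filter]
  exact Fintype.sum_equiv (Equiv.mulRight t) _ _ fun g => by simp [h]

theorem MonoidAlgebra.of_mul_sum_univ_of (t : G) :
    of R G t * ∑ g, of R G g = ∑ g, of R G g := by
  rw [mul_sum]
  exact Fintype.sum_equiv (Equiv.mulLeft t) _ _ fun g => (map_mul _ t g).symm

theorem MonoidAlgebra.sum_univ_of_mul_of (t : G) :
    (∑ g, of R G g) * of R G t = ∑ g, of R G g := by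
  rw [sum_mul]
  exact Fintype.sum_equiv (Equiv.mulRight t) _ _ fun g => (map_mul _ g t).symm

variable [DecidableEq G]

theorem Subgroup.card_filter_mul_eq_card_inf {H K : Subgroup G} [DecidablePred (· ∈ H)]
    [DecidablePred (· ∈ K)] {h₀ k₀ : G} (hh₀ : h₀ ∈ H) (hk₀ : k₀ ∈ K) :
    #{p ∈ ({h | h ∈ H} : Finset G) ×ˢ ({k | k ∈ K} : Finset G) | p.1 * p.2 = h₀ * k₀}
      = #({t | t ∈ H ∧ t ∈ K} : Finset G) := by
  refine card_nbij' (fun p => h₀⁻¹ * p.1) (fun t => (h₀ * t, t⁻¹ * k₀)) ?_ ?_ ?_ ?_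
  · rintro ⟨h, k⟩ hp
    simp only [coe_filter, mem_product, mem_filter, mem_univ, true_and] at hp ⊢
    obtain ⟨⟨hh, hk⟩, hhk⟩ := hp
    refine ⟨H.mul_mem (H.inv_mem hh₀) hh, ?_⟩
    have : h₀⁻¹ * h = k₀ * k⁻¹ := by
      rw [inv_mul_eq_iff_eq_mul, ← mul_assoc, ← hhk, mul_inv_cancel_right]
    rw [this]; exact K.mul_mem hk₀ (K.inv_mem hk)
  · intro t ht
    simp only [coe_filter, mem_product, mem_filter, mem_univ, true_and] at ht ⊢
    exact ⟨⟨H.mul_mem hh₀ ht.1, K.mul_mem (K.inv_mem ht.2) hk₀⟩, by group⟩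
  · rintro ⟨h, k⟩ hp
    simp only [coe_filter, mem_product, mem_filter, mem_univ, true_and] at hp
    ext
    · simp
    · simp [mul_assoc, ← hp.2]
  · intro t _
    simp

theorem MonoidAlgebra.sum_of_subgroup_mul_sum_of_subgroup (H K : Subgroup G)
    [DecidablePred (· ∈ H)] [DecidablePred (· ∈ K)] :
    (∑ h with h ∈ H, of R G h) * ∑ k with k ∈ K, of R G k
      = #({t | t ∈ H ∧ t ∈ K} : Finset G) •
        ∑ g ∈ ({h | h ∈ H} : Finset G) * ({k | k ∈ K} : Finset G), of R G g := by
  rw [sum_mul_sum, ← sum_product', smul_sum]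
  simp only [← map_mul]
  rw [sum_comp (of R G) (fun p : G × G => p.1 * p.2), image_mul_product]
  refine sum_congr rfl fun g hg => ?_
  obtain ⟨h₀, hh₀, k₀, hk₀, rfl⟩ := mem_mul.1 hg
  rw [Subgroup.card_filter_mul_eq_card_inf (mem_filter.1 hh₀).2 (mem_filter.1 hk₀).2]

end GroupAlgebra

local notation "SL₂" => Matrix.SpecialLinearGroup (Fin 2)

namespace Matrix.SpecialLinearGroup

variable {K : Type*} [CommRing K]

theorem det_fin_two_eq_one (g : SL₂ K) : g 0 0 * g 1 1 - g 0 1 * g 1 0 = 1 := by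
  rw [← Matrix.det_fin_two]; exact g.det_coe

theorem mul_apply_fin_two (g h : SL₂ K) (i j : Fin 2) :
    (g * h) i j = g i 0 * h 0 j + g i 1 * h 1 j := by
  simp [coe_mul, Matrix.mul_apply, Fin.sum_univ_two]

theorem diag_ne_zero_fin_two [Nontrivial K] {g : SL₂ K} (h : g 0 1 * g 1 0 = 0) :
    g 0 0 ≠ 0 ∧ g 1 1 ≠ 0 := by
  have hdet := det_fin_two_eq_one g
  rw [h, sub_zero] at hdet
  exact ⟨left_ne_zero_of_mul_eq_one hdet, right_ne_zero_of_mul_eq_one hdet⟩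

theorem antidiag_ne_zero_fin_two [Nontrivial K] {g : SL₂ K} (h : g 0 0 * g 1 1 = 0) :
    g 0 1 ≠ 0 ∧ g 1 0 ≠ 0 := by
  have hdet : g 0 1 * g 1 0 = -1 := by linear_combination h - det_fin_two_eq_one g
  have hne : g 0 1 * g 1 0 ≠ 0 := by rw [hdet]; exact neg_ne_zero.2 one_ne_zero
  exact ⟨left_ne_zero_of_mul hne, right_ne_zero_of_mul hne⟩

variable (K) in
def upperTriangular : Subgroup (SL₂ K) where
  carrier := {g | g 1 0 = 0}
  mul_mem' {a b} ha hb := by simp_all [mul_apply_fin_two]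
  one_mem' := by simp
  inv_mem' {a} (ha : a 1 0 = 0) := by
    show a⁻¹ 1 0 = 0
    simp [SL2_inv_expl, ha]

variable (K) in
def lowerTriangular : Subgroup (SL₂ K) where
  carrier := {g | g 0 1 = 0}
  mul_mem' {a b} ha hb := by simp_all [mul_apply_fin_two]
  one_mem' := by simp
  inv_mem' {a} (ha : a 0 1 = 0) := by
    show a⁻¹ 0 1 = 0
    simp [SL2_inv_expl, ha]

theorem mem_upperTriangular {g : SL₂ K} : g ∈ upperTriangular K ↔ g 1 0 = 0 := Iff.rfl

theorem mem_lowerTriangular {g : SL₂ K} : g ∈ lowerTriangular K ↔ g 0 1 = 0 := Iff.rfl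

instance [DecidableEq K] : DecidablePred (· ∈ upperTriangular K) :=
  fun g => decidable_of_iff (g 1 0 = 0) Iff.rfl

instance [DecidableEq K] : DecidablePred (· ∈ lowerTriangular K) :=
  fun g => decidable_of_iff (g 0 1 = 0) Iff.rfl

variable (K) in
def weyl : SL₂ K := ⟨!![0, 1; -1, 0], by simp [Matrix.det_fin_two]⟩

end Matrix.SpecialLinearGroup

open Matrix.SpecialLinearGroup

namespace SupportClass

abbrev Pattern := Bool × Bool × Bool × Bool

def Pattern.swapRows : Pattern → Pattern
  | (a, b, c, d) => (c, d, a, b)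

def Pattern.swapCols : Pattern → Pattern
  | (a, b, c, d) => (b, a, d, c)

theorem Pattern.swapRows_injective : Function.Injective Pattern.swapRows := by decide

theorem Pattern.swapCols_injective : Function.Injective Pattern.swapCols := by decide

/-- The patterns of `A, B, C, D₊, D₋, E₊, E₋`, in this order (`true` = nonzero entry). -/
def supportPatterns : Finset Pattern :=
  {(true, false, false, true), (false, true, true, false), (true, true, true, true),
    (true, true, false, true), (true, false, true, true), (true, true, true, false),
    (false, true, true, true)}

theorem swapRows_mem_supportPatterns {b : Pattern} (hb : b ∈ supportPatterns) :
    b.swapRows ∈ supportPatterns := by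
  revert b; decide

theorem swapCols_mem_supportPatterns {b : Pattern} (hb : b ∈ supportPatterns) :
    b.swapCols ∈ supportPatterns := by
  revert b; decide

variable {R : Type*} [CommRing R] {F : Type*} [Field F]

def IsMonomial (t : SL₂ F) : Prop :=
  t 0 1 = 0 ∧ t 1 0 = 0 ∨ t 0 0 = 0 ∧ t 1 1 = 0

theorem weyl_isMonomial : IsMonomial (weyl F) := Or.inr ⟨rfl, rfl⟩

theorem weyl_inv_isMonomial : IsMonomial (weyl F)⁻¹ := by
  rw [IsMonomial, SL2_inv_expl]
  simp [weyl]

variable [DecidableEq F]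

def pattern (g : SL₂ F) : Pattern :=
  (g 0 0 ≠ 0, g 0 1 ≠ 0, g 1 0 ≠ 0, g 1 1 ≠ 0)

theorem pattern_mem_supportPatterns (g : SL₂ F) : pattern g ∈ supportPatterns := by
  have hdet := det_fin_two_eq_one g
  by_cases h₁₁ : g 0 0 = 0 <;> by_cases h₁₂ : g 0 1 = 0 <;> by_cases h₂₁ : g 1 0 = 0 <;>
    by_cases h₂₂ : g 1 1 = 0 <;> simp_all [pattern, supportPatterns]

theorem isMonomial_of_pattern_eq {g : SL₂ F} {b : Pattern} (hg : pattern g = b)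
    (hb : b = (true, false, false, true) ∨ b = (false, true, true, false)) : IsMonomial g := by
  rcases hb with rfl | rfl <;> simp_all [pattern, IsMonomial]

theorem pattern_diag_mul {t : SL₂ F} (h₁₂ : t 0 1 = 0) (h₂₁ : t 1 0 = 0) (g : SL₂ F) :
    pattern (t * g) = pattern g := by
  obtain ⟨h₁₁, h₂₂⟩ := diag_ne_zero_fin_two (by rw [h₁₂, zero_mul])
  simp [pattern, mul_apply_fin_two, h₁₁, h₁₂, h₂₁, h₂₂]

theorem pattern_mul_diag {t : SL₂ F} (h₁₂ : t 0 1 = 0) (h₂₁ : t 1 0 = 0) (g : SL₂ F) :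
    pattern (g * t) = pattern g := by
  obtain ⟨h₁₁, h₂₂⟩ := diag_ne_zero_fin_two (by rw [h₁₂, zero_mul])
  simp [pattern, mul_apply_fin_two, h₁₁, h₁₂, h₂₁, h₂₂]

theorem pattern_antidiag_mul {t : SL₂ F} (h₁₁ : t 0 0 = 0) (h₂₂ : t 1 1 = 0) (g : SL₂ F) :
    pattern (t * g) = (pattern g).swapRows := by
  obtain ⟨h₁₂, h₂₁⟩ := antidiag_ne_zero_fin_two (by rw [h₁₁, zero_mul])
  simp [pattern, mul_apply_fin_two, h₁₁, h₁₂, h₂₁, h₂₂, Pattern.swapRows]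

theorem pattern_mul_antidiag {t : SL₂ F} (h₁₁ : t 0 0 = 0) (h₂₂ : t 1 1 = 0) (g : SL₂ F) :
    pattern (g * t) = (pattern g).swapCols := by
  obtain ⟨h₁₂, h₂₁⟩ := antidiag_ne_zero_fin_two (by rw [h₁₁, zero_mul])
  simp [pattern, mul_apply_fin_two, h₁₁, h₁₂, h₂₁, h₂₂, Pattern.swapCols]

variable [Fintype F]

variable (R F) in
noncomputable def patternClass (b : Pattern) : MonoidAlgebra R (SL₂ F) :=
  suppClass R F b.1 b.2.1 b.2.2.1 b.2.2.2

theorem patternClass_eq_sum (b : Pattern) :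
    patternClass R F b = ∑ g with pattern g = b, of R (SL₂ F) g := by
  obtain ⟨b₁₁, b₁₂, b₂₁, b₂₂⟩ := b
  unfold patternClass suppClass
  congr 1
  ext g
  cases b₁₁ <;> cases b₁₂ <;> cases b₂₁ <;> cases b₂₂ <;> simp [pattern]

theorem sum_filter_pattern (φ : Pattern → Prop) [DecidablePred φ] :
    ∑ g with φ (pattern g), of R (SL₂ F) g
      = ∑ b ∈ supportPatterns with φ b, patternClass R F b := by
  rw [← sum_fiberwise_of_maps_to (g := pattern) (t := {b ∈ supportPatterns | φ b})]
  · refine sum_congr rfl fun b hb => ?_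
    rw [patternClass_eq_sum, filter_filter]
    refine sum_congr (filter_congr fun g _ => ?_) fun _ _ => rfl
    constructor
    · rintro ⟨_, rfl⟩; rfl
    · rintro rfl; exact ⟨(mem_filter.1 hb).2, rfl⟩
  · intro g hg
    exact mem_filter.2 ⟨pattern_mem_supportPatterns g, (mem_filter.1 hg).2⟩

theorem sum_univ_of_eq : ∑ g, of R (SL₂ F) g
    = elA R F + elB R F + elC R F + elDp R F + elDm R F + elEp R F + elEm R F := by
  have h := sum_filter_pattern (R := R) (F := F) (fun _ => True)
  simp only [filter_true] at h
  rw [h]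
  simp [supportPatterns, patternClass, elA, elB, elC, elDp, elDm, elEp, elEm]
  abel

theorem sum_upperTriangular_eq : ∑ g with g ∈ upperTriangular F, of R (SL₂ F) g
    = elA R F + elDp R F := by
  have h := sum_filter_pattern (R := R) (F := F) (fun b => b.2.2.1 = false)
  rw [filter_congr fun g _ => show g ∈ upperTriangular F ↔ (pattern g).2.2.1 = false by
    simp [pattern, mem_upperTriangular], h,
    show {b ∈ supportPatterns | b.2.2.1 = false}
      = {(true, false, false, true), (true, true, false, true)} by decide, sum_pair (by decide)]
  rfl

theorem sum_lowerTriangular_eq : ∑ g with g ∈ lowerTriangular F, of R (SL₂ F) g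
    = elA R F + elDm R F := by
  have h := sum_filter_pattern (R := R) (F := F) (fun b => b.2.1 = false)
  rw [filter_congr fun g _ => show g ∈ lowerTriangular F ↔ (pattern g).2.1 = false by
    simp [pattern, mem_lowerTriangular], h,
    show {b ∈ supportPatterns | b.2.1 = false}
      = {(true, false, false, true), (true, false, true, true)} by decide, sum_pair (by decide)]
  rfl

theorem upperTriangular_mul_lowerTriangular :
    ({g | g ∈ upperTriangular F} : Finset (SL₂ F)) * ({g | g ∈ lowerTriangular F} : Finset _)
      = ({g | g 1 1 ≠ 0} : Finset _) := by
  ext g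
  simp only [mem_mul, mem_filter, mem_univ, true_and, mem_upperTriangular, mem_lowerTriangular]
  constructor
  · rintro ⟨u, hu, v, hv, rfl⟩
    rw [mul_apply_fin_two, hu, zero_mul, zero_add]
    exact mul_ne_zero (diag_ne_zero_fin_two (by rw [hu, mul_zero])).2
      (diag_ne_zero_fin_two (by rw [hv, zero_mul])).2
  · intro hg
    let u : SL₂ F := ⟨!![1, g 0 1 / g 1 1; 0, 1], by simp [Matrix.det_fin_two]⟩
    refine ⟨u, rfl, u⁻¹ * g, ?_, mul_inv_cancel_left u g⟩
    rw [mul_apply_fin_two, SL2_inv_expl]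
    simp [u, hg]

theorem of_mul_patternClass_of_diag {t : SL₂ F} (h₁₂ : t 0 1 = 0) (h₂₁ : t 1 0 = 0)
    (b : Pattern) : of R (SL₂ F) t * patternClass R F b = patternClass R F b := by
  simp only [patternClass_eq_sum]
  exact of_mul_sum_filter_of t fun g => by rw [pattern_diag_mul h₁₂ h₂₁]

theorem patternClass_mul_of_of_diag {t : SL₂ F} (h₁₂ : t 0 1 = 0) (h₂₁ : t 1 0 = 0)
    (b : Pattern) : patternClass R F b * of R (SL₂ F) t = patternClass R F b := by
  simp only [patternClass_eq_sum]
  exact sum_filter_of_mul_of t fun g => by rw [pattern_mul_diag h₁₂ h₂₁]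

theorem of_mul_patternClass_of_antidiag {t : SL₂ F} (h₁₁ : t 0 0 = 0) (h₂₂ : t 1 1 = 0)
    (b : Pattern) : of R (SL₂ F) t * patternClass R F b = patternClass R F b.swapRows := by
  simp only [patternClass_eq_sum]
  exact of_mul_sum_filter_of t fun g => by
    rw [pattern_antidiag_mul h₁₁ h₂₂, Pattern.swapRows_injective.eq_iff]

theorem patternClass_mul_of_of_antidiag {t : SL₂ F} (h₁₁ : t 0 0 = 0) (h₂₂ : t 1 1 = 0)
    (b : Pattern) : patternClass R F b * of R (SL₂ F) t = patternClass R F b.swapCols := by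
  simp only [patternClass_eq_sum]
  exact sum_filter_of_mul_of t fun g => by
    rw [pattern_mul_antidiag h₁₁ h₂₂, Pattern.swapCols_injective.eq_iff]

variable (R F) in
noncomputable def supportSpan : Submodule R (MonoidAlgebra R (SL₂ F)) :=
  Submodule.span R {elA R F, elB R F, elC R F, elDp R F, elDm R F, elEp R F, elEm R F}

theorem supportSpan_eq_span_image :
    supportSpan R F = Submodule.span R (patternClass R F '' supportPatterns) := by
  simp [supportSpan, supportPatterns, Set.image_insert_eq, patternClass, elA, elB, elC, elDp,
    elDm, elEp, elEm]

theorem patternClass_mem_supportSpan {b : Pattern} (hb : b ∈ supportPatterns) :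
    patternClass R F b ∈ supportSpan R F := by
  rw [supportSpan_eq_span_image]
  exact Submodule.subset_span ⟨b, hb, rfl⟩

theorem mul_mem_of_forall_mul_patternClass_mem {x y : MonoidAlgebra R (SL₂ F)}
    (h : ∀ b ∈ supportPatterns, x * patternClass R F b ∈ supportSpan R F)
    (hy : y ∈ supportSpan R F) : x * y ∈ supportSpan R F := by
  rw [supportSpan_eq_span_image] at hy
  refine Submodule.span_le (p := (supportSpan R F).comap (LinearMap.mulLeft R x)) |>.2 ?_ hy
  rintro _ ⟨b, hb, rfl⟩
  exact h b hb

theorem mul_mem_of_forall_patternClass_mul_mem {x y : MonoidAlgebra R (SL₂ F)}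
    (h : ∀ b ∈ supportPatterns, patternClass R F b * y ∈ supportSpan R F)
    (hx : x ∈ supportSpan R F) : x * y ∈ supportSpan R F := by
  rw [supportSpan_eq_span_image] at hx
  refine Submodule.span_le (p := (supportSpan R F).comap (LinearMap.mulRight R y)) |>.2 ?_ hx
  rintro _ ⟨b, hb, rfl⟩
  exact h b hb

theorem of_mul_mem_supportSpan {t : SL₂ F} (ht : IsMonomial t) {y : MonoidAlgebra R (SL₂ F)}
    (hy : y ∈ supportSpan R F) : of R (SL₂ F) t * y ∈ supportSpan R F := by
  refine mul_mem_of_forall_mul_patternClass_mem (fun b hb => ?_) hy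
  rcases ht with ⟨h₁₂, h₂₁⟩ | ⟨h₁₁, h₂₂⟩
  · rw [of_mul_patternClass_of_diag h₁₂ h₂₁]
    exact patternClass_mem_supportSpan hb
  · rw [of_mul_patternClass_of_antidiag h₁₁ h₂₂]
    exact patternClass_mem_supportSpan (swapRows_mem_supportPatterns hb)

theorem mul_of_mem_supportSpan {t : SL₂ F} (ht : IsMonomial t) {x : MonoidAlgebra R (SL₂ F)}
    (hx : x ∈ supportSpan R F) : x * of R (SL₂ F) t ∈ supportSpan R F := by
  refine mul_mem_of_forall_patternClass_mul_mem (fun b hb => ?_) hx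
  rcases ht with ⟨h₁₂, h₂₁⟩ | ⟨h₁₁, h₂₂⟩
  · rw [patternClass_mul_of_of_diag h₁₂ h₂₁]
    exact patternClass_mem_supportSpan hb
  · rw [patternClass_mul_of_of_antidiag h₁₁ h₂₂]
    exact patternClass_mem_supportSpan (swapCols_mem_supportPatterns hb)

theorem patternClass_mul_mem_of_monomial {b : Pattern}
    (hb : b = (true, false, false, true) ∨ b = (false, true, true, false))
    {y : MonoidAlgebra R (SL₂ F)} (hy : y ∈ supportSpan R F) :
    patternClass R F b * y ∈ supportSpan R F := by
  rw [patternClass_eq_sum, sum_mul]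
  exact sum_mem fun g hg =>
    of_mul_mem_supportSpan (isMonomial_of_pattern_eq (mem_filter.1 hg).2 hb) hy

theorem mul_patternClass_mem_of_monomial {b : Pattern}
    (hb : b = (true, false, false, true) ∨ b = (false, true, true, false))
    {x : MonoidAlgebra R (SL₂ F)} (hx : x ∈ supportSpan R F) :
    x * patternClass R F b ∈ supportSpan R F := by
  rw [patternClass_eq_sum, mul_sum]
  exact sum_mem fun g hg =>
    mul_of_mem_supportSpan (isMonomial_of_pattern_eq (mem_filter.1 hg).2 hb) hx

theorem elA_mem : elA R F ∈ supportSpan R F :=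
  patternClass_mem_supportSpan (b := (true, false, false, true)) (by decide)
theorem elDp_mem : elDp R F ∈ supportSpan R F :=
  patternClass_mem_supportSpan (b := (true, true, false, true)) (by decide)
theorem elDm_mem : elDm R F ∈ supportSpan R F :=
  patternClass_mem_supportSpan (b := (true, false, true, true)) (by decide)

theorem sum_filter_pattern_mem (φ : Pattern → Prop) [DecidablePred φ] :
    ∑ g with φ (pattern g), of R (SL₂ F) g ∈ supportSpan R F := by
  rw [sum_filter_pattern]
  exact sum_mem fun b hb => patternClass_mem_supportSpan (mem_filter.1 hb).1

theorem sum_univ_of_mem : ∑ g, of R (SL₂ F) g ∈ supportSpan R F := by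
  simpa using sum_filter_pattern_mem (R := R) (F := F) fun _ => True

theorem sum_univ_of_mul_mem {y : MonoidAlgebra R (SL₂ F)} (hy : y ∈ supportSpan R F) :
    (∑ g, of R (SL₂ F) g) * y ∈ supportSpan R F := by
  refine mul_mem_of_forall_mul_patternClass_mem (fun b _ => ?_) hy
  rw [patternClass_eq_sum, mul_sum_of_eq_card_smul fun t _ => sum_univ_of_mul_of t]
  exact nsmul_mem sum_univ_of_mem _

theorem mul_sum_univ_of_mem {x : MonoidAlgebra R (SL₂ F)} (hx : x ∈ supportSpan R F) :
    x * ∑ g, of R (SL₂ F) g ∈ supportSpan R F := by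
  refine mul_mem_of_forall_patternClass_mul_mem (fun b _ => ?_) hx
  rw [patternClass_eq_sum, sum_of_mul_eq_card_smul fun t _ => of_mul_sum_univ_of t]
  exact nsmul_mem sum_univ_of_mem _

theorem elC_eq : elC R F = ∑ g, of R (SL₂ F) g
    - elA R F - elB R F - elDp R F - elDm R F - elEp R F - elEm R F := by
  rw [sum_univ_of_eq]; abel

theorem elDp_mul_weyl : elDp R F * of R (SL₂ F) (weyl F) = elEp R F :=
  patternClass_mul_of_of_antidiag (b := (true, true, false, true)) rfl rfl

theorem weyl_mul_elDp : of R (SL₂ F) (weyl F) * elDp R F = elEm R F :=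
  of_mul_patternClass_of_antidiag (b := (true, true, false, true)) rfl rfl

theorem weyl_mul_elDp_mul_weyl :
    of R (SL₂ F) (weyl F) * elDp R F * of R (SL₂ F) (weyl F) = elDm R F := by
  rw [weyl_mul_elDp]
  exact patternClass_mul_of_of_antidiag (b := (false, true, true, true)) rfl rfl

theorem elDp_mul_elDp_mem : elDp R F * elDp R F ∈ supportSpan R F := by
  set P := ∑ g with g ∈ upperTriangular F, of R (SL₂ F) g
  have hP : P = elA R F + elDp R F := sum_upperTriangular_eq
  have hPP : P * P = #{g | g ∈ upperTriangular F} • P :=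
    sum_of_mul_eq_card_smul fun t ht =>
      of_mul_sum_filter_of t fun g => (Subgroup.mul_mem_cancel_left _ (mem_filter.1 ht).2).symm
  have hsplit : elDp R F * elDp R F
      = P * P - elA R F * elA R F - elA R F * elDp R F - elDp R F * elA R F := by
    rw [hP]; noncomm_ring
  rw [hsplit, hPP, hP]
  refine sub_mem (sub_mem (sub_mem (nsmul_mem (add_mem elA_mem elDp_mem) _) ?_) ?_) ?_
  · exact patternClass_mul_mem_of_monomial (.inl rfl) elA_mem
  · exact patternClass_mul_mem_of_monomial (.inl rfl) elDp_mem
  · exact mul_patternClass_mem_of_monomial (.inl rfl) elDp_mem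

theorem elDp_mul_elDm_mem : elDp R F * elDm R F ∈ supportSpan R F := by
  set P := ∑ g with g ∈ upperTriangular F, of R (SL₂ F) g
  set L := ∑ g with g ∈ lowerTriangular F, of R (SL₂ F) g
  have hP : P = elA R F + elDp R F := sum_upperTriangular_eq
  have hL : L = elA R F + elDm R F := sum_lowerTriangular_eq
  have hPL :=
    sum_of_subgroup_mul_sum_of_subgroup (R := R) (upperTriangular F) (lowerTriangular F)
  rw [upperTriangular_mul_lowerTriangular] at hPL
  have hcell : ∑ g with g 1 1 ≠ 0, of R (SL₂ F) g ∈ supportSpan R F := by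
    simpa [pattern] using sum_filter_pattern_mem (R := R) (F := F) fun b => b.2.2.2 = true
  have hsplit : elDp R F * elDm R F
      = P * L - elA R F * elA R F - elA R F * elDm R F - elDp R F * elA R F := by
    rw [hP, hL]; noncomm_ring
  rw [hsplit, hPL]
  refine sub_mem (sub_mem (sub_mem (nsmul_mem hcell _) ?_) ?_) ?_
  · exact patternClass_mul_mem_of_monomial (.inl rfl) elA_mem
  · exact patternClass_mul_mem_of_monomial (.inl rfl) elDm_mem
  · exact mul_patternClass_mem_of_monomial (.inl rfl) elDp_mem

theorem elDp_mul_elEp_mem : elDp R F * elEp R F ∈ supportSpan R F := by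
  rw [← elDp_mul_weyl, ← mul_assoc]
  exact mul_of_mem_supportSpan weyl_isMonomial elDp_mul_elDp_mem

theorem elDp_mul_elEm_mem : elDp R F * elEm R F ∈ supportSpan R F := by
  have h : elDp R F * elEm R F = elDp R F * elDm R F * of R (SL₂ F) (weyl F)⁻¹ := by
    rw [← weyl_mul_elDp_mul_weyl, ← weyl_mul_elDp]
    simp only [mul_assoc, ← map_mul, mul_inv_cancel, map_one, mul_one]
  rw [h]
  exact mul_of_mem_supportSpan weyl_inv_isMonomial elDp_mul_elDm_mem

theorem elDp_mul_elC_mem : elDp R F * elC R F ∈ supportSpan R F := by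
  rw [elC_eq]
  simp only [mul_sub]
  refine sub_mem (sub_mem (sub_mem (sub_mem (sub_mem (sub_mem ?_ ?_) ?_) elDp_mul_elDp_mem)
    elDp_mul_elDm_mem) elDp_mul_elEp_mem) elDp_mul_elEm_mem
  · exact mul_sum_univ_of_mem elDp_mem
  · exact mul_patternClass_mem_of_monomial (.inl rfl) elDp_mem
  · exact mul_patternClass_mem_of_monomial (.inr rfl) elDp_mem

theorem elDp_mul_mem {y : MonoidAlgebra R (SL₂ F)} (hy : y ∈ supportSpan R F) :
    elDp R F * y ∈ supportSpan R F := by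
  refine mul_mem_of_forall_mul_patternClass_mem (fun b hb => ?_) hy
  simp only [supportPatterns, mem_insert, mem_singleton] at hb
  rcases hb with rfl | rfl | rfl | rfl | rfl | rfl | rfl
  exacts [mul_patternClass_mem_of_monomial (.inl rfl) elDp_mem,
    mul_patternClass_mem_of_monomial (.inr rfl) elDp_mem, elDp_mul_elC_mem, elDp_mul_elDp_mem,
    elDp_mul_elDm_mem, elDp_mul_elEp_mem, elDp_mul_elEm_mem]

theorem elEp_mul_mem {y : MonoidAlgebra R (SL₂ F)} (hy : y ∈ supportSpan R F) :
    elEp R F * y ∈ supportSpan R F := by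
  rw [← elDp_mul_weyl, mul_assoc]
  exact elDp_mul_mem (of_mul_mem_supportSpan weyl_isMonomial hy)

theorem elEm_mul_mem {y : MonoidAlgebra R (SL₂ F)} (hy : y ∈ supportSpan R F) :
    elEm R F * y ∈ supportSpan R F := by
  rw [← weyl_mul_elDp, mul_assoc]
  exact of_mul_mem_supportSpan weyl_isMonomial (elDp_mul_mem hy)

theorem elDm_mul_mem {y : MonoidAlgebra R (SL₂ F)} (hy : y ∈ supportSpan R F) :
    elDm R F * y ∈ supportSpan R F := by
  rw [← weyl_mul_elDp_mul_weyl, mul_assoc, mul_assoc]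
  exact of_mul_mem_supportSpan weyl_isMonomial
    (elDp_mul_mem (of_mul_mem_supportSpan weyl_isMonomial hy))

theorem elC_mul_mem {y : MonoidAlgebra R (SL₂ F)} (hy : y ∈ supportSpan R F) :
    elC R F * y ∈ supportSpan R F := by
  rw [elC_eq]
  simp only [sub_mul]
  refine sub_mem (sub_mem (sub_mem (sub_mem (sub_mem (sub_mem (sum_univ_of_mul_mem hy) ?_) ?_)
    (elDp_mul_mem hy)) (elDm_mul_mem hy)) (elEp_mul_mem hy)) (elEm_mul_mem hy)
  · exact patternClass_mul_mem_of_monomial (.inl rfl) hy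
  · exact patternClass_mul_mem_of_monomial (.inr rfl) hy

theorem mul_mem_supportSpan {x y : MonoidAlgebra R (SL₂ F)} (hx : x ∈ supportSpan R F)
    (hy : y ∈ supportSpan R F) : x * y ∈ supportSpan R F := by
  refine mul_mem_of_forall_patternClass_mul_mem (fun b hb => ?_) hx
  simp only [supportPatterns, mem_insert, mem_singleton] at hb
  rcases hb with rfl | rfl | rfl | rfl | rfl | rfl | rfl
  exacts [patternClass_mul_mem_of_monomial (.inl rfl) hy,
    patternClass_mul_mem_of_monomial (.inr rfl) hy, elC_mul_mem hy, elDp_mul_mem hy,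
    elDm_mul_mem hy, elEp_mul_mem hy, elEm_mul_mem hy]

end SupportClass

theorem supportClasses_span_mul_closed_general (F : Type*) [Field F] [Fintype F] [DecidableEq F]
    (x y : MonoidAlgebra ℤ (Matrix.SpecialLinearGroup (Fin 2) F))
    (hx : x ∈ Submodule.span ℤ ({elA ℤ F, elB ℤ F, elC ℤ F, elDp ℤ F, elDm ℤ F, elEp ℤ F, elEm ℤ F} : Set (MonoidAlgebra ℤ (Matrix.SpecialLinearGroup (Fin 2) F))))
    (hy : y ∈ Submodule.span ℤ ({elA ℤ F, elB ℤ F, elC ℤ F, elDp ℤ F, elDm ℤ F, elEp ℤ F, elEm ℤ F} : Set (MonoidAlgebra ℤ (Matrix.SpecialLinearGroup (Fin 2) F)))) :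
    x * y ∈ Submodule.span ℤ ({elA ℤ F, elB ℤ F, elC ℤ F, elDp ℤ F, elDm ℤ F, elEp ℤ F, elEm ℤ F} : Set (MonoidAlgebra ℤ (Matrix.SpecialLinearGroup (Fin 2) F))) :=
  SupportClass.mul_mem_supportSpan hx hy

theorem supportClasses_span_mul_closed (F : Type*) [Field F] [Fintype F] [DecidableEq F]
    (hq : 2 < Fintype.card F)
    (x y : MonoidAlgebra ℤ (Matrix.SpecialLinearGroup (Fin 2) F))
    (hx : x ∈ Submodule.span ℤ ({elA ℤ F, elB ℤ F, elC ℤ F, elDp ℤ F, elDm ℤ F, elEp ℤ F, elEm ℤ F} : Set (MonoidAlgebra ℤ (Matrix.SpecialLinearGroup (Fin 2) F))))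
    (hy : y ∈ Submodule.span ℤ ({elA ℤ F, elB ℤ F, elC ℤ F, elDp ℤ F, elDm ℤ F, elEp ℤ F, elEm ℤ F} : Set (MonoidAlgebra ℤ (Matrix.SpecialLinearGroup (Fin 2) F)))) :
    x * y ∈ Submodule.span ℤ ({elA ℤ F, elB ℤ F, elC ℤ F, elDp ℤ F, elDm ℤ F, elEp ℤ F, elEm ℤ F} : Set (MonoidAlgebra ℤ (Matrix.SpecialLinearGroup (Fin 2) F))) :=
  supportClasses_span_mul_closed_general F x y hx hy
end

section
/- In ℤ[SL₂(F)] one has D₊² = E₊·E₋ = (q−1)²·A + (q−1)(q−2)·D₊, and D₋² = E₋·E₊ = (q−1)²·A + (q−1)(q−2)·D₋. -/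
open MonoidAlgebra

/-! Every upper triangular matrix in `SL₂(F)` is uniquely a product `t * u`, and also uniquely a
product `u * t`, of a diagonal `t` and a unipotent `u`. Hence with
`A` the sum over the diagonal torus and `N` the sum over the unipotent subgroup, `A * N = N * A`
is the sum over the Borel subgroup, which is `A + D₊`. As sums over subgroups, `A * A = (q - 1) • A`
and `N * N = q • N`, and expanding `D₊ * D₊ = (A * N - A) * (A * N - A)` gives the identity for
`D₊`. Multiplying by `w = !![0, -1; 1, 0]` on either side permutes support patterns:
`E₊ = D₊ * w`, `E₋ = w⁻¹ * D₊`, `D₋ = w⁻¹ * D₊ * w` and `w⁻¹ * A * w = A`, which transports the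
identity to the other three products. -/

open MonoidAlgebra Matrix MatrixGroups

theorem Fintype.sum_eq_zero_add_sum_units {K M : Type*} [GroupWithZero K] [Fintype K]
    [DecidableEq K] [AddCommMonoid M] (f : K → M) :
    ∑ x, f x = f 0 + ∑ u : Kˣ, f u := by
  let e : Option Kˣ ≃ K := WithZero.withZeroUnitsEquiv.toEquiv
  rw [← e.sum_comp]
  exact Fintype.sum_option _

theorem MonoidAlgebra.sum_of_mul_self {k G ι : Type*} [Semiring k] [Monoid G] [Fintype ι]
    (f : ι → G) (hf : ∀ i, ∃ e : ι ≃ ι, ∀ j, f i * f j = f (e j)) :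
    (∑ i, of k G (f i)) * ∑ i, of k G (f i) = Fintype.card ι • ∑ i, of k G (f i) := by
  rw [Finset.sum_mul_sum, ← Finset.card_univ, ← Finset.sum_const]
  refine Finset.sum_congr rfl fun i _ => ?_
  obtain ⟨e, he⟩ := hf i
  simp only [← map_mul, he]
  exact e.sum_comp fun j => of k G (f j)

theorem mul_self_eq_of_mul_eq_add {S : Type*} [Ring S] {A N D : S} {m n : ℤ}
    (hA : A * A = m • A) (hN : N * N = n • N) (hAN : A * N = A + D) (hNA : N * A = A + D) :
    D * D = (m * (n - 1)) • A + (m * (n - 2)) • D := by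
  have hD : D = A * N - A := by rw [hAN]; abel
  calc D * D = A * (N * A) * N - A * (N * A) - A * A * N + A * A := by rw [hD]; noncomm_ring
    _ = (A * A) * (N * N) - (A * A) * N - (A * A) * N + A * A := by
      rw [hNA, ← hAN]; noncomm_ring
    _ = (m * (n - 1)) • A + (m * (n - 2)) • D := by
      rw [hA, hN, smul_mul_assoc, mul_smul_comm, smul_smul, smul_mul_assoc, hAN]
      module

namespace SL2

section Field

variable {F : Type*} [Field F]

def upper (a : Fˣ) (b : F) : SL(2, F) :=
  ⟨!![(a : F), b; 0, ((a⁻¹ : Fˣ) : F)], by simp [det_fin_two_of]⟩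

@[simp]
theorem coe_upper (a : Fˣ) (b : F) :
    ((upper a b : SL(2, F)) : Matrix (Fin 2) (Fin 2) F) = !![(a : F), b; 0, ((a⁻¹ : Fˣ) : F)] :=
  rfl

def weyl : SL(2, F) := ⟨!![0, -1; 1, 0], by simp [det_fin_two_of]⟩

theorem upper_mul (a c : Fˣ) (b e : F) :
    upper a b * upper c e = upper (a * c) (a * e + b * (c⁻¹ : Fˣ)) := by
  ext i j
  rw [Matrix.SpecialLinearGroup.coe_mul]
  fin_cases i <;> fin_cases j <;> simp [upper, Matrix.mul_apply, Fin.sum_univ_two, mul_comm]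

theorem upper_injective2 : Function.Injective2 (upper (F := F)) := by
  intro a c b e h
  have h00 := congrArg (fun g : SL(2, F) => g 0 0) h
  have h01 := congrArg (fun g : SL(2, F) => g 0 1) h
  simp only [upper] at h00 h01
  exact ⟨Units.ext h00, h01⟩

theorem eq_upper_of_apply_one_zero {g : SL(2, F)} (h : g 1 0 = 0) :
    ∃ a : Fˣ, upper a (g 0 1) = g := by
  have hdet : g 0 0 * g 1 1 = 1 := by
    have := g.prop
    rwa [det_fin_two, h, mul_zero, sub_zero] at this
  refine ⟨Units.mk0 _ (left_ne_zero_of_mul_eq_one hdet), ?_⟩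
  ext i j
  fin_cases i <;> fin_cases j <;> simp [upper, h, inv_eq_of_mul_eq_one_right hdet]

theorem coe_mul_weyl (g : SL(2, F)) :
    ((g * weyl : SL(2, F)) : Matrix (Fin 2) (Fin 2) F) = !![g 0 1, -g 0 0; g 1 1, -g 1 0] := by
  rw [Matrix.SpecialLinearGroup.coe_mul]
  ext i j
  fin_cases i <;> fin_cases j <;> simp [weyl, Matrix.mul_apply, Fin.sum_univ_two]

theorem coe_weyl_inv_mul (g : SL(2, F)) :
    ((weyl⁻¹ * g : SL(2, F)) : Matrix (Fin 2) (Fin 2) F) = !![g 1 0, g 1 1; -g 0 0, -g 0 1] := by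
  rw [Matrix.SpecialLinearGroup.coe_mul, Matrix.SpecialLinearGroup.coe_inv]
  ext i j
  fin_cases i <;> fin_cases j <;> simp [weyl, adjugate_fin_two, Matrix.mul_apply, Fin.sum_univ_two]

end Field

variable (R : Type*) [CommRing R] (F : Type*) [Field F] [Fintype F]

noncomputable def unipotentSum : MonoidAlgebra R SL(2, F) :=
  ∑ b : F, of R SL(2, F) (upper 1 b)

theorem unipotentSum_mul_self :
    unipotentSum R F * unipotentSum R F = Fintype.card F • unipotentSum R F :=
  sum_of_mul_self _ fun b => ⟨Equiv.addRight b, fun e => by simp [upper_mul]⟩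

variable [DecidableEq F]

theorem suppClass_mul_of_weyl (b₁₁ b₁₂ b₂₁ b₂₂ : Bool) :
    suppClass R F b₁₁ b₁₂ b₂₁ b₂₂ * of R SL(2, F) weyl = suppClass R F b₁₂ b₁₁ b₂₂ b₂₁ := by
  rw [suppClass, suppClass, Finset.sum_mul]
  refine Finset.sum_equiv (Equiv.mulRight weyl) (fun g => ?_) fun g _ => (map_mul _ g weyl).symm
  simp only [Finset.mem_filter, Finset.mem_univ, true_and, Equiv.coe_mulRight, coe_mul_weyl,
    Matrix.of_apply, cons_val', cons_val_zero, cons_val_one, empty_val', cons_val_fin_one,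
    neg_ne_zero]
  tauto

theorem of_weyl_inv_mul_suppClass (b₁₁ b₁₂ b₂₁ b₂₂ : Bool) :
    of R SL(2, F) weyl⁻¹ * suppClass R F b₁₁ b₁₂ b₂₁ b₂₂ = suppClass R F b₂₁ b₂₂ b₁₁ b₁₂ := by
  rw [suppClass, suppClass, Finset.mul_sum]
  refine Finset.sum_equiv (Equiv.mulLeft weyl⁻¹) (fun g => ?_) fun g _ => (map_mul _ _ g).symm
  simp only [Finset.mem_filter, Finset.mem_univ, true_and, Equiv.coe_mulLeft, coe_weyl_inv_mul,
    Matrix.of_apply, cons_val', cons_val_zero, cons_val_one, empty_val', cons_val_fin_one,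
    neg_ne_zero]
  tauto

theorem elA_eq_sum_upper : elA R F = ∑ a : Fˣ, of R SL(2, F) (upper a 0) := by
  symm
  refine Finset.sum_bij (fun a _ => upper a 0) (fun a _ => ?_)
    (fun a _ c _ h => (upper_injective2 h).1) (fun g hg => ?_) fun _ _ => rfl
  · simp
  · simp only [Finset.mem_filter, Finset.mem_univ, true_and, Bool.false_eq_true, true_iff,
      false_iff, not_not] at hg
    obtain ⟨a, ha⟩ := eq_upper_of_apply_one_zero hg.2.2.1
    exact ⟨a, Finset.mem_univ _, hg.2.1 ▸ ha⟩

theorem elDp_eq_sum_upper :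
    elDp R F = ∑ p : Fˣ × Fˣ, of R SL(2, F) (upper p.1 p.2) := by
  symm
  refine Finset.sum_bij (fun p _ => upper p.1 p.2) (fun p _ => ?_)
    (fun p _ p' _ h => Prod.ext (upper_injective2 h).1 (Units.ext (upper_injective2 h).2))
    (fun g hg => ?_) fun _ _ => rfl
  · simp
  · simp only [Finset.mem_filter, Finset.mem_univ, true_and, Bool.false_eq_true, true_iff,
      false_iff, not_not] at hg
    obtain ⟨a, ha⟩ := eq_upper_of_apply_one_zero hg.2.2.1
    exact ⟨(a, Units.mk0 _ hg.2.1), Finset.mem_univ _, ha⟩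

theorem sum_upper_eq_elA_add_elDp :
    ∑ a : Fˣ, ∑ b : F, of R SL(2, F) (upper a b) = elA R F + elDp R F := by
  simp only [Fintype.sum_eq_zero_add_sum_units (fun b : F => of R SL(2, F) (upper _ b)),
    Finset.sum_add_distrib, elA_eq_sum_upper, elDp_eq_sum_upper, Fintype.sum_prod_type]

theorem elA_mul_self : elA R F * elA R F = Fintype.card Fˣ • elA R F := by
  rw [elA_eq_sum_upper]
  exact sum_of_mul_self _ fun a => ⟨Equiv.mulLeft a, fun c => by simp [upper_mul]⟩

theorem elA_mul_unipotentSum : elA R F * unipotentSum R F = elA R F + elDp R F := by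
  rw [← sum_upper_eq_elA_add_elDp, elA_eq_sum_upper, unipotentSum, Finset.sum_mul_sum]
  refine Finset.sum_congr rfl fun a _ => ?_
  simp only [← map_mul, upper_mul, mul_one, zero_mul, add_zero]
  exact Fintype.sum_equiv (Equiv.mulLeft₀ (a : F) a.ne_zero) _ _ fun _ => rfl

theorem unipotentSum_mul_elA : unipotentSum R F * elA R F = elA R F + elDp R F := by
  rw [← sum_upper_eq_elA_add_elDp, elA_eq_sum_upper, unipotentSum, Finset.sum_mul_sum,
    Finset.sum_comm]
  refine Finset.sum_congr rfl fun a _ => ?_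
  simp only [← map_mul, upper_mul, one_mul, mul_zero, zero_add]
  exact Fintype.sum_equiv (Equiv.mulRight₀ _ (a⁻¹).ne_zero) _ _ fun _ => rfl

theorem elDp_mul_self :
    elDp R F * elDp R F = ((Fintype.card F : ℤ) - 1) ^ 2 • elA R F +
      (((Fintype.card F : ℤ) - 1) * ((Fintype.card F : ℤ) - 2)) • elDp R F := by
  have hA : elA R F * elA R F = ((Fintype.card F : ℤ) - 1) • elA R F := by
    rw [elA_mul_self, ← natCast_zsmul, Fintype.card_units, Nat.cast_sub Fintype.card_pos,
      Nat.cast_one]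
  have hN : unipotentSum R F * unipotentSum R F = (Fintype.card F : ℤ) • unipotentSum R F := by
    rw [unipotentSum_mul_self, natCast_zsmul]
  rw [sq]
  exact mul_self_eq_of_mul_eq_add hA hN (elA_mul_unipotentSum R F) (unipotentSum_mul_elA R F)

end SL2

open SL2

theorem elD_sq_general (F : Type*) [Field F] [Fintype F] [DecidableEq F]
    (q : ℤ) (hqc : q = Fintype.card F) :
    elDp ℤ F * elDp ℤ F = (q - 1) ^ 2 • elA ℤ F + ((q - 1) * (q - 2)) • elDp ℤ F ∧
    elEp ℤ F * elEm ℤ F = (q - 1) ^ 2 • elA ℤ F + ((q - 1) * (q - 2)) • elDp ℤ F ∧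
    elDm ℤ F * elDm ℤ F = (q - 1) ^ 2 • elA ℤ F + ((q - 1) * (q - 2)) • elDm ℤ F ∧
    elEm ℤ F * elEp ℤ F = (q - 1) ^ 2 • elA ℤ F + ((q - 1) * (q - 2)) • elDm ℤ F := by
  set w := of ℤ SL(2, F) weyl
  set w' := of ℤ SL(2, F) weyl⁻¹
  have hww' : w * w' = 1 := by rw [← map_mul, mul_inv_cancel, map_one]
  have hEp : elEp ℤ F = elDp ℤ F * w := (suppClass_mul_of_weyl ..).symm
  have hEm : elEm ℤ F = w' * elDp ℤ F := (of_weyl_inv_mul_suppClass ..).symm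
  have hDm : w' * elDp ℤ F * w = elDm ℤ F := by
    rw [elDp, mul_assoc, suppClass_mul_of_weyl, of_weyl_inv_mul_suppClass, elDm]
  have hA : w' * elA ℤ F * w = elA ℤ F := by
    rw [elA, mul_assoc, suppClass_mul_of_weyl, of_weyl_inv_mul_suppClass]
  have hD : elDp ℤ F * elDp ℤ F = (q - 1) ^ 2 • elA ℤ F + ((q - 1) * (q - 2)) • elDp ℤ F :=
    hqc ▸ elDp_mul_self ℤ F
  have hconj : w' * (elDp ℤ F * elDp ℤ F) * w =
      (q - 1) ^ 2 • elA ℤ F + ((q - 1) * (q - 2)) • elDm ℤ F := by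
    rw [hD, mul_add, add_mul, mul_smul_comm, mul_smul_comm, smul_mul_assoc, smul_mul_assoc, hA,
      hDm]
  refine ⟨hD, ?_, ?_, ?_⟩
  · rw [hEp, hEm, mul_assoc, ← mul_assoc w, hww', one_mul, hD]
  · rw [← hconj, ← hDm]
    simp only [mul_assoc]
    rw [← mul_assoc w, hww', one_mul]
  · rw [hEm, hEp, ← hconj]
    simp only [mul_assoc]

theorem elD_sq (F : Type*) [Field F] [Fintype F] [DecidableEq F]
    (hq : 2 < Fintype.card F) (q : ℤ) (hqc : q = Fintype.card F) :
    elDp ℤ F * elDp ℤ F = (q - 1) ^ 2 • elA ℤ F + ((q - 1) * (q - 2)) • elDp ℤ F ∧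
    elEp ℤ F * elEm ℤ F = (q - 1) ^ 2 • elA ℤ F + ((q - 1) * (q - 2)) • elDp ℤ F ∧
    elDm ℤ F * elDm ℤ F = (q - 1) ^ 2 • elA ℤ F + ((q - 1) * (q - 2)) • elDm ℤ F ∧
    elEm ℤ F * elEp ℤ F = (q - 1) ^ 2 • elA ℤ F + ((q - 1) * (q - 2)) • elDm ℤ F :=
  elD_sq_general F q hqc
end

section
/- The traces of the ℚ-linear endomorphisms of ℚ[SL₂(F)] given by left-multiplication by π₁, π₂, π₃, π₄ are respectively 1, (q+1)(q−2)/2, q(q−1)/2, and 2q. -/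
open MonoidAlgebra

/-!
In the basis `G` of `k[G]`, every diagonal entry of left multiplication by `x` is the
coefficient of `x` at `1`, so its trace is `|G| • x 1`. Among the seven support classes only
`A` contains the identity, and `|SL₂(F)| = q³ - q` because `det : GL₂(F) → Fˣ` is onto with
kernel `SL₂(F)`. Each trace is therefore `q³ - q` times the coefficient of `A` in `πᵢ`.
-/

theorem MonoidAlgebra.trace_mulLeft {k G : Type*} [CommRing k] [Group G] [Fintype G]
    (x : MonoidAlgebra k G) :
    LinearMap.trace k (MonoidAlgebra k G) (LinearMap.mulLeft k x) = Fintype.card G • x.coeff 1 := by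
  classical
  let b := MonoidAlgebra.basis G k
  have hdiag (g : G) : LinearMap.toMatrix b b (LinearMap.mulLeft k x) g g = x.coeff 1 := by
    rw [LinearMap.toMatrix_apply]
    change (x * single g 1).coeff g = _
    simp
  rw [LinearMap.trace_eq_matrix_trace k b, Matrix.trace]
  simp only [Matrix.diag, hdiag, Finset.sum_const, Finset.card_univ]

theorem Matrix.card_GL_eq_card_SL_mul_card_units {n R : Type*} [Fintype n] [DecidableEq n]
    [Nonempty n] [CommRing R] [Finite R] :
    Nat.card (GL n R) = Nat.card (SpecialLinearGroup n R) * Nat.card Rˣ := by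
  have hrange : SpecialLinearGroup.toGL.range = (GeneralLinearGroup.det : GL n R →* Rˣ).ker := by
    ext g
    constructor
    · rintro ⟨A, rfl⟩
      exact SpecialLinearGroup.coeToGL_det A
    · intro hg
      exact ⟨⟨g, congrArg Units.val hg⟩, Units.ext rfl⟩
  rw [← Subgroup.card_mul_index GeneralLinearGroup.det.ker, Subgroup.index_ker,
    MonoidHom.range_eq_top.mpr GeneralLinearGroup.det_surjective, Subgroup.card_top, ← hrange,
    Nat.card_congr (MonoidHom.ofInjective SpecialLinearGroup.toGL_injective).toEquiv]

theorem card_SL_two_field (F : Type*) [Field F] [Fintype F] :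
    (Nat.card (Matrix.SpecialLinearGroup (Fin 2) F) : ℚ) =
      (Fintype.card F : ℚ) ^ 3 - Fintype.card F := by
  have h := Matrix.card_GL_eq_card_SL_mul_card_units (n := Fin 2) (R := F)
  rw [Matrix.card_GL_field, Nat.card_units, Nat.card_eq_fintype_card (α := F),
    Fin.prod_univ_two] at h
  simp only [Fin.val_zero, Fin.val_one, pow_zero, pow_one] at h
  set q := Fintype.card F
  have hq : 1 < q := Fintype.one_lt_card
  have hcast := congrArg (Nat.cast : ℕ → ℚ) h
  push_cast [Nat.cast_sub hq.le, Nat.cast_sub (Nat.one_le_pow _ _ (by omega) : 1 ≤ q ^ 2),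
    Nat.cast_sub (Nat.le_self_pow two_ne_zero q)] at hcast
  have hq' : (q : ℚ) - 1 ≠ 0 := sub_ne_zero.mpr (by exact_mod_cast hq.ne')
  refine mul_right_cancel₀ hq' ?_
  linear_combination -hcast

theorem suppClass_coeff_one (R F : Type*) [CommRing R] [Field F] [Fintype F] [DecidableEq F]
    (b₁₁ b₁₂ b₂₁ b₂₂ : Bool) :
    (suppClass R F b₁₁ b₁₂ b₂₁ b₂₂).coeff 1 =
      if (b₁₁, b₁₂, b₂₁, b₂₂) = (true, false, false, true) then 1 else 0 := by
  classical
  simp only [suppClass, MonoidAlgebra.coeff_sum, Finsupp.finsetSum_apply, of_apply,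
    MonoidAlgebra.coeff_single, Finsupp.single_apply, Finset.sum_ite_eq', Finset.mem_filter,
    Finset.mem_univ, true_and, Matrix.SpecialLinearGroup.coe_one, Matrix.one_apply]
  cases b₁₁ <;> cases b₁₂ <;> cases b₂₁ <;> cases b₂₂ <;> simp

theorem trace_pi_general (F : Type*) [Field F] [Fintype F] [DecidableEq F]
    (q : ℚ) (hqc : q = Fintype.card F)
    (π₁ π₂ π₃ π₄ : MonoidAlgebra ℚ (Matrix.SpecialLinearGroup (Fin 2) F))
    (hπ₁ : π₁ = (q ^ 3 - q)⁻¹ •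
      (elA ℚ F + elB ℚ F + elC ℚ F + elDp ℚ F + elDm ℚ F + elEp ℚ F + elEm ℚ F))
    (hπ₂ : π₂ = ((q - 2) / (2 * (q ^ 2 - q))) • (elA ℚ F + elB ℚ F) +
      (q * (q - 1) ^ 2)⁻¹ • elC ℚ F -
      ((q - 2) / (2 * q * (q - 1) ^ 2)) • (elDp ℚ F + elDm ℚ F + elEp ℚ F + elEm ℚ F))
    (hπ₃ : π₃ = (2 * (q + 1))⁻¹ • (elA ℚ F - elB ℚ F) +
      (2 * (q ^ 2 - 1))⁻¹ • (-elDp ℚ F - elDm ℚ F + elEp ℚ F + elEm ℚ F))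
    (hπ₄ : π₄ = ((q + 1) * (q - 1) ^ 2)⁻¹ •
      ((2 * (q - 1)) • elA ℚ F - (2 : ℚ) • elC ℚ F + (q - 2) • (elDp ℚ F + elDm ℚ F) -
        (elEp ℚ F + elEm ℚ F))) :
    LinearMap.trace ℚ (MonoidAlgebra ℚ (Matrix.SpecialLinearGroup (Fin 2) F)) (LinearMap.mulLeft ℚ π₁) = 1 ∧
    LinearMap.trace ℚ (MonoidAlgebra ℚ (Matrix.SpecialLinearGroup (Fin 2) F)) (LinearMap.mulLeft ℚ π₂) = (q + 1) * (q - 2) / 2 ∧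
    LinearMap.trace ℚ (MonoidAlgebra ℚ (Matrix.SpecialLinearGroup (Fin 2) F)) (LinearMap.mulLeft ℚ π₃) = q * (q - 1) / 2 ∧
    LinearMap.trace ℚ (MonoidAlgebra ℚ (Matrix.SpecialLinearGroup (Fin 2) F)) (LinearMap.mulLeft ℚ π₄) = 2 * q := by
  have hq : 2 ≤ q := hqc ▸ mod_cast Fintype.one_lt_card (α := F)
  have hq₁ : q - 1 ≠ 0 := by linarith
  have hq₃ : q ^ 3 - q ≠ 0 := by nlinarith
  have hq₂ : q ^ 2 - q ≠ 0 := by nlinarith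
  have hq₄ : q ^ 2 - 1 ≠ 0 := by nlinarith
  have hcard : (Fintype.card (Matrix.SpecialLinearGroup (Fin 2) F) : ℚ) = q ^ 3 - q := by
    rw [← Nat.card_eq_fintype_card, card_SL_two_field, hqc]
  simp only [MonoidAlgebra.trace_mulLeft, nsmul_eq_mul, hcard, hπ₁, hπ₂, hπ₃, hπ₄, elA, elB, elC,
    elDp, elDm, elEp, elEm, MonoidAlgebra.coeff_add, MonoidAlgebra.coeff_sub,
    MonoidAlgebra.coeff_neg, MonoidAlgebra.coeff_smul, Finsupp.add_apply, Finsupp.sub_apply,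
    Finsupp.neg_apply, Finsupp.smul_apply, smul_eq_mul, suppClass_coeff_one,
    Prod.mk.injEq, reduceCtorEq, and_false, false_and, and_self, ↓reduceIte]
  refine ⟨?_, ?_, ?_, ?_⟩ <;> field_simp <;> ring

theorem trace_pi (F : Type*) [Field F] [Fintype F] [DecidableEq F]
    (hq : 2 < Fintype.card F) (q : ℚ) (hqc : q = Fintype.card F)
    (π₁ π₂ π₃ π₄ : MonoidAlgebra ℚ (Matrix.SpecialLinearGroup (Fin 2) F))
    (hπ₁ : π₁ = (q ^ 3 - q)⁻¹ •
      (elA ℚ F + elB ℚ F + elC ℚ F + elDp ℚ F + elDm ℚ F + elEp ℚ F + elEm ℚ F))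
    (hπ₂ : π₂ = ((q - 2) / (2 * (q ^ 2 - q))) • (elA ℚ F + elB ℚ F) +
      (q * (q - 1) ^ 2)⁻¹ • elC ℚ F -
      ((q - 2) / (2 * q * (q - 1) ^ 2)) • (elDp ℚ F + elDm ℚ F + elEp ℚ F + elEm ℚ F))
    (hπ₃ : π₃ = (2 * (q + 1))⁻¹ • (elA ℚ F - elB ℚ F) +
      (2 * (q ^ 2 - 1))⁻¹ • (-elDp ℚ F - elDm ℚ F + elEp ℚ F + elEm ℚ F))
    (hπ₄ : π₄ = ((q + 1) * (q - 1) ^ 2)⁻¹ •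
      ((2 * (q - 1)) • elA ℚ F - (2 : ℚ) • elC ℚ F + (q - 2) • (elDp ℚ F + elDm ℚ F) -
        (elEp ℚ F + elEm ℚ F))) :
    LinearMap.trace ℚ (MonoidAlgebra ℚ (Matrix.SpecialLinearGroup (Fin 2) F)) (LinearMap.mulLeft ℚ π₁) = 1 ∧
    LinearMap.trace ℚ (MonoidAlgebra ℚ (Matrix.SpecialLinearGroup (Fin 2) F)) (LinearMap.mulLeft ℚ π₂) = (q + 1) * (q - 2) / 2 ∧
    LinearMap.trace ℚ (MonoidAlgebra ℚ (Matrix.SpecialLinearGroup (Fin 2) F)) (LinearMap.mulLeft ℚ π₃) = q * (q - 1) / 2 ∧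
    LinearMap.trace ℚ (MonoidAlgebra ℚ (Matrix.SpecialLinearGroup (Fin 2) F)) (LinearMap.mulLeft ℚ π₄) = 2 * q :=
  trace_pi_general F q hqc π₁ π₂ π₃ π₄ hπ₁ hπ₂ hπ₃ hπ₄
end
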